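/- Let M be a compact Hausdorff space with basepoint x₀, fix 0 < ε < 1/6, and let σ : [0,ε] → M be a stick. Then the set A := r(([0,ε] ∪ [1−ε,1]) × Ω^σM) is a closed subset of X := r([0,1] × Ω^σM), where X carries the subspace topology inherited from ΩM. -/
import Mathlib


open Set

/-- The based loop space of `M` at `x₀`: continuous maps `[0,1] → M` sending both
endpoints to `x₀`, with the compact-open topology. -/
abbrev OmegaLoop (M : Type*) [TopologicalSpace M] (x₀ : M) : Type _ :=
  {γ : C(unitInterval, M) // γ 0 = x₀ ∧ γ 1 = x₀}

/-- The subspace `Ω^σ M` of loops following the stick `σ` on `[0,ε]` and its reverse on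
`[1-ε,1]`. -/
abbrev StickOmegaLoop (M : Type*) [TopologicalSpace M] (x₀ : M) (ε : ℝ) (σ : ℝ → M) :
    Type _ :=
  {γ : OmegaLoop M x₀ // ∀ t : unitInterval,
    ((t : ℝ) ≤ ε → γ.1 t = σ t) ∧ (1 - ε ≤ (t : ℝ) → γ.1 t = σ (1 - (t : ℝ)))}

/-- The restriction of the reparametrization map `r` to `[0,1] × Ω^σM`. -/
def restrictedRep {M : Type*} [TopologicalSpace M] (x₀ : M) (ε : ℝ) (σ : ℝ → M)
    (r : C(unitInterval × OmegaLoop M x₀, OmegaLoop M x₀)) :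
    unitInterval × StickOmegaLoop M x₀ ε σ → OmegaLoop M x₀ :=
  fun p => r (p.1, p.2.1)

/-- Auxiliary: a set of loops that agree with `σ ∘ g s` on a region, for some parameter
`s ∈ [0,ε]`, is closed (it is the projection of a closed set along the compact `[0,ε]`). -/
lemma isClosed_param_set {M : Type*} [TopologicalSpace M] [T2Space M] (x₀ : M)
    (ε : ℝ) (σ : ℝ → M) (hσcont : ContinuousOn σ (Icc 0 ε))
    (P : unitInterval → Prop) (g : ℝ → ℝ → ℝ)
    (hg : Continuous fun p : ℝ × ℝ => g p.1 p.2)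
    (hmap : ∀ s ∈ Icc (0:ℝ) ε, ∀ t : unitInterval, P t → g s (t:ℝ) ∈ Icc (0:ℝ) ε) :
    IsClosed {x : OmegaLoop M x₀ | ∃ s ∈ Icc (0:ℝ) ε,
      ∀ t : unitInterval, P t → x.1 t = σ (g s (t:ℝ))} := by
  have hF : IsClosed {p : Icc (0:ℝ) ε × OmegaLoop M x₀ |
      ∀ t : unitInterval, P t → p.2.1 t = σ (g (p.1:ℝ) (t:ℝ))} := by
    have h1 : {p : Icc (0:ℝ) ε × OmegaLoop M x₀ |
        ∀ t : unitInterval, P t → p.2.1 t = σ (g (p.1:ℝ) (t:ℝ))} =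
        ⋂ t : unitInterval, {p | P t → p.2.1 t = σ (g (p.1:ℝ) (t:ℝ))} := by
      ext p; simp
    rw [h1]
    refine isClosed_iInter fun t => ?_
    by_cases hPt : P t
    · have h2 : {p : Icc (0:ℝ) ε × OmegaLoop M x₀ | P t → p.2.1 t = σ (g (p.1:ℝ) (t:ℝ))} =
          {p | p.2.1 t = σ (g (p.1:ℝ) (t:ℝ))} := by ext p; simp [hPt]
      rw [h2]
      apply isClosed_eq
      · exact (continuous_eval_const t).comp (continuous_subtype_val.comp continuous_snd)
      · refine hσcont.comp_continuous ?_ fun p => hmap p.1 p.1.2 t hPt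
        exact hg.comp ((continuous_subtype_val.comp continuous_fst).prodMk continuous_const)
    · convert isClosed_univ
      ext p; simp [hPt]
  have himg : {x : OmegaLoop M x₀ | ∃ s ∈ Icc (0:ℝ) ε,
      ∀ t : unitInterval, P t → x.1 t = σ (g s (t:ℝ))} =
      Prod.snd '' {p : Icc (0:ℝ) ε × OmegaLoop M x₀ |
        ∀ t : unitInterval, P t → p.2.1 t = σ (g (p.1:ℝ) (t:ℝ))} := by
    ext x
    constructor
    · rintro ⟨s, hs, h⟩; exact ⟨(⟨s, hs⟩, x), h, rfl⟩
    · rintro ⟨⟨s, y⟩, h, rfl⟩; exact ⟨(s:ℝ), s.2, h⟩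
  rw [himg]
  exact isClosedMap_snd_of_compactSpace _ hF

/-- Let `M` be compact Hausdorff with basepoint `x₀`, `0 < ε < 1/6`, and
`σ` a stick.  The set `A := r(([0,ε] ∪ [1-ε,1]) × Ω^σM)` is a closed subset of
`X := r([0,1] × Ω^σM)`, where `X` carries the subspace topology from `ΩM`. -/
theorem ends_image_closed_in_image
    {M : Type*} [TopologicalSpace M] [CompactSpace M] [T2Space M]
    (x₀ : M) (ε : ℝ) (hε0 : 0 < ε) (hε : ε < 1/6)
    (σ : ℝ → M) (hσcont : ContinuousOn σ (Icc 0 ε)) (hσinj : InjOn σ (Icc 0 ε))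
    (hσ0 : σ 0 = x₀)
    (r : C(unitInterval × OmegaLoop M x₀, OmegaLoop M x₀))
    (hr : ∀ (s : unitInterval) (γ : OmegaLoop M x₀) (t : unitInterval),
      ((t : ℝ) ≤ 1/2 →
        (r (s, γ)).1 t = γ.1 (projIcc 0 1 zero_le_one (2 * (s : ℝ) * (t : ℝ)))) ∧
      (1/2 ≤ (t : ℝ) →
        (r (s, γ)).1 t =
          γ.1 (projIcc 0 1 zero_le_one (2 * (1 - (s : ℝ)) * (t : ℝ) - 1 + 2 * (s : ℝ))))) :
    IsClosed {x : Set.range (restrictedRep x₀ ε σ r) |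
      (x : OmegaLoop M x₀) ∈
        restrictedRep x₀ ε σ r '' {p | (p.1 : ℝ) ≤ ε ∨ 1 - ε ≤ (p.1 : ℝ)}} := by
  set C₁ : Set (OmegaLoop M x₀) := {x | ∃ s ∈ Icc (0:ℝ) ε,
    ∀ t : unitInterval, (t:ℝ) ≤ 1/2 → x.1 t = σ (2 * s * (t:ℝ))} with hC₁def
  set C₂ : Set (OmegaLoop M x₀) := {x | ∃ s ∈ Icc (0:ℝ) ε,
    ∀ t : unitInterval, 1/2 ≤ (t:ℝ) → x.1 t = σ (2 * s * (1 - (t:ℝ)))} with hC₂def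
  have hC₁ : IsClosed C₁ := by
    refine isClosed_param_set x₀ ε σ hσcont _ (fun s t => 2 * s * t) (by fun_prop) ?_
    rintro s ⟨hs0, hsε⟩ t ht
    have h0 := t.2.1
    constructor
    · show (0:ℝ) ≤ 2 * s * (t:ℝ); nlinarith
    · show 2 * s * (t:ℝ) ≤ ε; nlinarith
  have hC₂ : IsClosed C₂ := by
    refine isClosed_param_set x₀ ε σ hσcont _ (fun s t => 2 * s * (1 - t)) (by fun_prop) ?_
    rintro s ⟨hs0, hsε⟩ t ht
    have h1 := t.2.2
    constructor
    · show (0:ℝ) ≤ 2 * s * (1 - (t:ℝ)); nlinarith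
    · show 2 * s * (1 - (t:ℝ)) ≤ ε; nlinarith
  have key : {x : Set.range (restrictedRep x₀ ε σ r) |
      (x : OmegaLoop M x₀) ∈
        restrictedRep x₀ ε σ r '' {p | (p.1 : ℝ) ≤ ε ∨ 1 - ε ≤ (p.1 : ℝ)}} =
      Subtype.val ⁻¹' (C₁ ∪ C₂) := by
    ext ⟨x, hx⟩
    simp only [mem_setOf_eq, mem_preimage, mem_union]
    constructor
    · rintro ⟨⟨s', γ'⟩, hmem, hq⟩
      simp only [restrictedRep] at hq
      rcases hmem with hs' | hs'
      · -- s' ≤ ε, first half follows the stick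
        left
        refine ⟨(s':ℝ), ⟨s'.2.1, hs'⟩, fun t ht => ?_⟩
        have h1 := (hr s' γ'.1 t).1 ht
        rw [← hq]
        have hmem2 : 2 * (s':ℝ) * (t:ℝ) ∈ Icc (0:ℝ) 1 := by
          constructor
          · have := s'.2.1; have := t.2.1; positivity
          · have := s'.2.2; have := s'.2.1; have := t.2.1; nlinarith
        rw [h1, projIcc_of_mem zero_le_one hmem2]
        have hle : ((⟨2 * (s':ℝ) * (t:ℝ), hmem2⟩ : unitInterval) : ℝ) ≤ ε := by
          have := s'.2.1; have := t.2.1; simp only; nlinarith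
        exact (γ'.2 _).1 hle
      · -- 1 - ε ≤ s', second half follows the reversed stick
        right
        refine ⟨1 - (s':ℝ), ⟨by linarith [s'.2.2], by linarith⟩, fun t ht => ?_⟩
        have h1 := (hr s' γ'.1 t).2 ht
        rw [← hq]
        set v : ℝ := 2 * (1 - (s':ℝ)) * (t:ℝ) - 1 + 2 * (s':ℝ) with hv
        have hmem2 : v ∈ Icc (0:ℝ) 1 := by
          constructor
          · have := s'.2.1; have := s'.2.2; have := t.2.2; nlinarith
          · have := s'.2.1; have := s'.2.2; have := t.2.2; nlinarith
        rw [h1, projIcc_of_mem zero_le_one hmem2]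
        have hge : 1 - ε ≤ ((⟨v, hmem2⟩ : unitInterval) : ℝ) := by
          have := s'.2.2; have := t.2.2; simp only; nlinarith
        rw [(γ'.2 _).2 hge]
        congr 1
        simp only
        ring
    · rintro (⟨s', hs', hC⟩ | ⟨u, hu, hC⟩)
      · -- x ∈ C₁ : show the parameter s of any representation satisfies s ≤ ε
        obtain ⟨⟨s, γ⟩, hq⟩ := hx
        simp only [restrictedRep] at hq
        refine ⟨(s, γ), ?_, hq⟩
        left
        by_cases hs0 : (s:ℝ) = 0
        · rw [hs0]; linarith
        have hspos : 0 < (s:ℝ) := lt_of_le_of_ne s.2.1 (Ne.symm hs0)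
        set v : ℝ := min (s:ℝ) ε with hvdef
        have hv0 : 0 < v := lt_min hspos hε0
        have hvs : v ≤ (s:ℝ) := min_le_left _ _
        have hvε : v ≤ ε := min_le_right _ _
        have htmem : v / (2 * (s:ℝ)) ∈ Icc (0:ℝ) 1 := by
          constructor
          · positivity
          · rw [div_le_one (by positivity)]; nlinarith
        set tI : unitInterval := ⟨v / (2 * (s:ℝ)), htmem⟩ with htIdef
        have ht : (tI:ℝ) ≤ 1/2 := by
          show v / (2 * (s:ℝ)) ≤ 1/2
          rw [div_le_iff₀ (by positivity)]; nlinarith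
        have harg : 2 * (s:ℝ) * (tI:ℝ) = v := by
          show 2 * (s:ℝ) * (v / (2 * (s:ℝ))) = v
          field_simp
        have h1 := (hr s γ.1 tI).1 ht
        have hmem2 : 2 * (s:ℝ) * (tI:ℝ) ∈ Icc (0:ℝ) 1 := by
          rw [harg]; exact ⟨hv0.le, by linarith⟩
        rw [projIcc_of_mem zero_le_one hmem2] at h1
        have hxv : x.1 tI = σ v := by
          rw [← hq, h1]
          have hle : ((⟨2 * (s:ℝ) * (tI:ℝ), hmem2⟩ : unitInterval) : ℝ) ≤ ε := by
            show 2 * (s:ℝ) * (tI:ℝ) ≤ ε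
            rw [harg]; exact hvε
          rw [(γ.2 _).1 hle]
          exact congrArg σ harg
        have hxv2 : x.1 tI = σ (2 * s' * (tI:ℝ)) := hC tI ht
        have heq : v = 2 * s' * (tI:ℝ) := by
          refine hσinj ⟨hv0.le, hvε⟩ ⟨?_, ?_⟩ (hxv.symm.trans hxv2)
          · have h0 := tI.2.1; have := hs'.1; nlinarith
          · have h0 := tI.2.1; have := hs'.1; have := hs'.2; nlinarith
        have h5 : (s:ℝ) * v = s' * v := by
          calc (s:ℝ) * v = s' * (2 * (s:ℝ) * (tI:ℝ)) := by rw [heq]; ring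
          _ = s' * v := by rw [harg]
        have hss' : (s:ℝ) = s' := by
          have := mul_right_cancel₀ (ne_of_gt hv0) h5
          exact this
        rw [hss']; exact hs'.2
      · -- x ∈ C₂ : show 1 - ε ≤ s
        obtain ⟨⟨s, γ⟩, hq⟩ := hx
        simp only [restrictedRep] at hq
        refine ⟨(s, γ), ?_, hq⟩
        right
        by_cases hs1 : (s:ℝ) = 1
        · rw [hs1]; linarith
        have hslt : (s:ℝ) < 1 := lt_of_le_of_ne s.2.2 hs1
        have hspos : 0 < 1 - (s:ℝ) := by linarith
        set w : ℝ := min (1 - (s:ℝ)) ε with hwdef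
        have hw0 : 0 < w := lt_min hspos hε0
        have hws : w ≤ 1 - (s:ℝ) := min_le_left _ _
        have hwε : w ≤ ε := min_le_right _ _
        have hq2 : w / (2 * (1 - (s:ℝ))) ≤ 1/2 := by
          rw [div_le_iff₀ (by positivity)]; nlinarith
        have hq0 : 0 ≤ w / (2 * (1 - (s:ℝ))) := div_nonneg hw0.le (by linarith)
        have htmem : 1 - w / (2 * (1 - (s:ℝ))) ∈ Icc (0:ℝ) 1 := ⟨by linarith, by linarith⟩
        set tI : unitInterval := ⟨1 - w / (2 * (1 - (s:ℝ))), htmem⟩ with htIdef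
        have ht : 1/2 ≤ (tI:ℝ) := by
          show 1/2 ≤ 1 - w / (2 * (1 - (s:ℝ))); linarith
        have h1t : 1 - (tI:ℝ) = w / (2 * (1 - (s:ℝ))) := by
          show 1 - (1 - w / (2 * (1 - (s:ℝ)))) = _; ring
        have harg : 2 * (1 - (s:ℝ)) * (1 - (tI:ℝ)) = w := by
          rw [h1t]; field_simp
        have hvw : 2 * (1 - (s:ℝ)) * (tI:ℝ) - 1 + 2 * (s:ℝ) = 1 - w := by
          have : 2 * (1 - (s:ℝ)) * (tI:ℝ) - 1 + 2 * (s:ℝ)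
              = 1 - 2 * (1 - (s:ℝ)) * (1 - (tI:ℝ)) := by ring
          rw [this, harg]
        have h1 := (hr s γ.1 tI).2 ht
        have hmem2 : 2 * (1 - (s:ℝ)) * (tI:ℝ) - 1 + 2 * (s:ℝ) ∈ Icc (0:ℝ) 1 := by
          rw [hvw]; exact ⟨by linarith, by linarith⟩
        rw [projIcc_of_mem zero_le_one hmem2] at h1
        have hxv : x.1 tI = σ w := by
          rw [← hq, h1]
          have hge : 1 - ε ≤
              ((⟨2 * (1 - (s:ℝ)) * (tI:ℝ) - 1 + 2 * (s:ℝ), hmem2⟩ : unitInterval) : ℝ) := by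
            show 1 - ε ≤ 2 * (1 - (s:ℝ)) * (tI:ℝ) - 1 + 2 * (s:ℝ)
            rw [hvw]; linarith
          rw [(γ.2 _).2 hge]
          refine congrArg σ ?_
          show 1 - (2 * (1 - (s:ℝ)) * (tI:ℝ) - 1 + 2 * (s:ℝ)) = w
          rw [hvw]; ring
        have hxv2 : x.1 tI = σ (2 * u * (1 - (tI:ℝ))) := hC tI ht
        have heq : w = 2 * u * (1 - (tI:ℝ)) := by
          refine hσinj ⟨hw0.le, hwε⟩ ⟨?_, ?_⟩ (hxv.symm.trans hxv2)
          · rw [h1t]; have := hu.1; positivity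
          · have h2 : 1 - (tI:ℝ) ≤ 1/2 := by rw [h1t]; exact hq2
            have h3 : 0 ≤ 1 - (tI:ℝ) := by rw [h1t]; exact hq0
            have := hu.1; have := hu.2; nlinarith
        have h5 : (1 - (s:ℝ)) * w = u * w := by
          calc (1 - (s:ℝ)) * w = u * (2 * (1 - (s:ℝ)) * (1 - (tI:ℝ))) := by rw [heq]; ring
          _ = u * w := by rw [harg]
        have hus : 1 - (s:ℝ) = u := mul_right_cancel₀ (ne_of_gt hw0) h5
        have := hu.2
        linarith
  rw [key]
  exact ((hC₁.union hC₂)).preimage continuous_subtype_val
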